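/- For any N, L, k ∈ ℕ+ with k ≥ 2, there exists a function φ : ℝ^k → ℝ implemented by a ReLU FNN with width at most 9(N+1) + k − 1 and depth at most 7kL(k−1) such that |φ(x) − x_1 x_2 ⋯ x_k| ≤ 9(k−1)·(N+1)^{−7kL} for every x = (x_1, x_2, …, x_k) ∈ [0,1]^k. -/
import Mathlib


open Real

noncomputable section

/-- `A` is an affine map from `ℝ^m` to `ℝ^n`. -/
def IsAffineMap (m n : ℕ) (A : (Fin m → ℝ) → (Fin n → ℝ)) : Prop :=
  ∃ (M : Matrix (Fin n) (Fin m) ℝ) (b : Fin n → ℝ), ∀ x, A x = M.mulVec x + b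

/-- `φ : ℝ^d → ℝ` is realized by a ReLU network with exactly `L'` hidden layers,
each of positive width at most `W`. -/
def ReLUNetRec (W : ℝ) : ℕ → ∀ d : ℕ, ((Fin d → ℝ) → ℝ) → Prop
  | 0, d, φ => ∃ A : (Fin d → ℝ) → (Fin 1 → ℝ), IsAffineMap d 1 A ∧ ∀ x, φ x = A x 0
  | L' + 1, d, φ => ∃ n : ℕ, 0 < n ∧ (n : ℝ) ≤ W ∧
      ∃ A : (Fin d → ℝ) → (Fin n → ℝ), IsAffineMap d n A ∧
        ∃ ψ : (Fin n → ℝ) → ℝ, ReLUNetRec W L' n ψ ∧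
          ∀ x, φ x = ψ (fun i => max (A x i) 0)

/-- `φ : ℝ^d → ℝ` is implemented by a ReLU FNN with width at most `W` and depth at most `D`. -/
def ImplementedBy (d : ℕ) (W D : ℝ) (φ : (Fin d → ℝ) → ℝ) : Prop :=
  ∃ L' : ℕ, (L' : ℝ) ≤ D ∧ ReLUNetRec W L' d φ

/-- one-dimensional-input version of `ImplementedBy`. -/
def ImplementedBy1 (W D : ℝ) (φ : ℝ → ℝ) : Prop :=
  ImplementedBy 1 W D (fun x => φ (x 0))

/-- two-dimensional-input version of `ImplementedBy`. -/
def ImplementedBy2 (W D : ℝ) (φ : ℝ → ℝ → ℝ) : Prop :=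
  ImplementedBy 2 W D (fun x => φ (x 0) (x 1))

/-- the unit cube `[0,1]^k`. -/
def unitCube (k : ℕ) : Set (Fin k → ℝ) := Set.Icc 0 1

namespace RP
open Finset


/-- affine functional on `ℝ^ι`. -/
def AffS {ι : Type*} [Fintype ι] (f : (ι → ℝ) → ℝ) : Prop :=
  ∃ (c : ι → ℝ) (b : ℝ), ∀ w, f w = (∑ j, c j * w j) + b

variable {ι : Type*} [Fintype ι]

lemma AffS.const (b : ℝ) : AffS (fun _ : ι → ℝ => b) := ⟨0, b, by simp⟩

lemma AffS.eval [DecidableEq ι] (j : ι) : AffS (fun w : ι → ℝ => w j) := by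
  refine ⟨fun j' => if j' = j then 1 else 0, 0, fun w => ?_⟩
  simp [ite_mul]

lemma AffS.add {f g : (ι → ℝ) → ℝ} (hf : AffS f) (hg : AffS g) :
    AffS (fun w => f w + g w) := by
  obtain ⟨c, b, hc⟩ := hf; obtain ⟨c', b', hc'⟩ := hg
  exact ⟨c + c', b + b', fun w => by
    simp [hc, hc', add_mul, Finset.sum_add_distrib]; ring⟩

lemma AffS.smul {f : (ι → ℝ) → ℝ} (r : ℝ) (hf : AffS f) :
    AffS (fun w => r * f w) := by
  obtain ⟨c, b, hc⟩ := hf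
  exact ⟨fun j => r * c j, r * b, fun w => by
    simp [hc, Finset.mul_sum, mul_add, mul_assoc]⟩

lemma AffS.neg {f : (ι → ℝ) → ℝ} (hf : AffS f) : AffS (fun w => - f w) := by
  simpa using hf.smul (-1)

lemma AffS.sub {f g : (ι → ℝ) → ℝ} (hf : AffS f) (hg : AffS g) :
    AffS (fun w => f w - g w) := by
  simpa [sub_eq_add_neg] using hf.add hg.neg

lemma AffS.sum {α : Type*} (t : Finset α) (f : α → (ι → ℝ) → ℝ)
    (hf : ∀ a ∈ t, AffS (f a)) : AffS (fun w => ∑ a ∈ t, f a w) := by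
  classical
  induction t using Finset.induction with
  | empty => simpa using AffS.const 0
  | @insert a t hni ih =>
    rw [show (fun w => ∑ b ∈ insert a t, f b w) = fun w => f a w + ∑ b ∈ t, f b w from
      funext fun w => Finset.sum_insert hni]
    exact (hf a (Finset.mem_insert_self a t)).add
      (ih fun b hb => hf b (Finset.mem_insert_of_mem hb))

/-- a map whose rows are affine functionals is affine. -/
lemma isAffineMap_of_rows (m n : ℕ) (A : (Fin m → ℝ) → (Fin n → ℝ))
    (h : ∀ i, AffS (fun x => A x i)) : IsAffineMap m n A := by
  choose c b hc using h
  refine ⟨Matrix.of c, b, fun x => ?_⟩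
  funext i
  simp [Matrix.mulVec, dotProduct, hc i x]

/-- iterate ReLU layers, appending at the output end. -/
def itr {P : ℕ} (B : ℕ → (Fin P → ℝ) → Fin P → ℝ) : ℕ → (Fin P → ℝ) → Fin P → ℝ
  | 0, v => v
  | n+1, v => fun i => max (B n (itr B n v) i) 0

lemma itr_shift {P : ℕ} (B : ℕ → (Fin P → ℝ) → Fin P → ℝ) (n : ℕ) (v : Fin P → ℝ) :
    itr B (n+1) v = itr (fun i => B (i+1)) n (fun j => max (B 0 v j) 0) := by
  induction n generalizing v with
  | zero => rfl
  | succ n ih =>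
    show (fun i => max (B (n+1) (itr B (n+1) v) i) 0) = _
    rw [ih v]
    rfl

lemma build {P : ℕ} (W : ℝ) (hP : 0 < P) (hPW : (P : ℝ) ≤ W) :
    ∀ (n : ℕ) (d : ℕ) (A : (Fin d → ℝ) → (Fin P → ℝ)), IsAffineMap d P A →
    ∀ (B : ℕ → (Fin P → ℝ) → Fin P → ℝ), (∀ i, IsAffineMap P P (B i)) →
    ∀ (C : (Fin P → ℝ) → ℝ), IsAffineMap P 1 (fun v _ => C v) →
    ReLUNetRec W (n+1) d (fun x => C (itr B n (fun i => max (A x i) 0))) := by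
  intro n
  induction n with
  | zero =>
    intro d A hA B hB C hC
    exact ⟨P, hP, hPW, A, hA, fun v => C v, ⟨fun v _ => C v, hC, fun v => rfl⟩,
      fun x => rfl⟩
  | succ n ih =>
    intro d A hA B hB C hC
    refine ⟨P, hP, hPW, A, hA,
      fun v => C (itr (fun i => B (i+1)) n (fun j => max (B 0 v j) 0)), ?_, ?_⟩
    · exact ih P (B 0) (hB 0) (fun i => B (i+1)) (fun i => hB (i+1)) C hC
    · intro x
      exact congrArg C (itr_shift B n _)


/-- coefficients of the zigzag `T`. -/
def ct (Mn : ℕ) : ℕ → ℝ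
  | 0 => (Mn : ℝ)
  | j+1 => (-1)^(j+1) * (2*(Mn:ℝ))

/-- coefficients of the correction `Q`. -/
def cq (Mn : ℕ) : ℕ → ℝ
  | 0 => ((Mn:ℝ)-1)/(Mn:ℝ)
  | _+1 => -2/(Mn:ℝ)

def Tnet (Mn : ℕ) (u : ℝ) : ℝ := ∑ j ∈ range Mn, ct Mn j * max (u - (j:ℝ)/(Mn:ℝ)) 0
def Qnet (Mn : ℕ) (u : ℝ) : ℝ := ∑ j ∈ range Mn, cq Mn j * max (u - (j:ℝ)/(Mn:ℝ)) 0

lemma exists_cell (Mn : ℕ) (hM : 0 < Mn) {u : ℝ} (hu : u ∈ Set.Icc (0:ℝ) 1) :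
    ∃ j₀ < Mn, (j₀:ℝ)/(Mn:ℝ) ≤ u ∧ u ≤ ((j₀:ℝ)+1)/(Mn:ℝ) := by
  obtain ⟨hu0, hu1⟩ := hu
  have hMpos : (0:ℝ) < (Mn:ℝ) := by exact_mod_cast hM
  have hcast : ((Mn - 1 : ℕ):ℝ) = (Mn:ℝ) - 1 := by
    rw [Nat.cast_sub (by omega : 1 ≤ Mn)]; norm_num
  by_cases h : u = 1
  · refine ⟨Mn - 1, Nat.sub_lt hM one_pos, ?_, ?_⟩
    · subst h
      rw [div_le_one hMpos, hcast]; linarith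
    · subst h
      rw [le_div_iff₀ hMpos, hcast]; linarith
  · have hu1' : u < 1 := lt_of_le_of_ne hu1 h
    have hfl : Nat.floor (u * Mn) < Mn := by
      rw [Nat.floor_lt (by positivity)]
      nlinarith
    refine ⟨Nat.floor (u * Mn), hfl, ?_, ?_⟩
    · rw [div_le_iff₀ hMpos]
      exact Nat.floor_le (by positivity)
    · rw [le_div_iff₀ hMpos]
      have := Nat.lt_floor_add_one (u * Mn)
      linarith

section Cell
variable {Mn j₀ : ℕ} {u : ℝ}

lemma net_on_cell (c : ℕ → ℝ) (hM : 0 < Mn) (hj : j₀ < Mn)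
    (h1 : (j₀:ℝ)/(Mn:ℝ) ≤ u) (h2 : u ≤ ((j₀:ℝ)+1)/(Mn:ℝ)) :
    ∑ j ∈ range Mn, c j * max (u - (j:ℝ)/(Mn:ℝ)) 0
      = ∑ j ∈ range (j₀+1), c j * (u - (j:ℝ)/(Mn:ℝ)) := by
  have hMpos : (0:ℝ) < (Mn:ℝ) := by exact_mod_cast hM
  rw [← Finset.sum_range_add_sum_Ico _ (Nat.succ_le_of_lt hj)]
  have hz : ∑ j ∈ Finset.Ico (j₀+1) Mn, c j * max (u - (j:ℝ)/(Mn:ℝ)) 0 = 0 := by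
    apply Finset.sum_eq_zero
    intro j hj'
    have hjge : (j₀:ℝ) + 1 ≤ (j:ℝ) := by
      have := (Finset.mem_Ico.mp hj').1
      exact_mod_cast this
    have : u - (j:ℝ)/(Mn:ℝ) ≤ 0 := by
      have : ((j₀:ℝ)+1)/(Mn:ℝ) ≤ (j:ℝ)/(Mn:ℝ) := by
        gcongr
      linarith
    simp [max_eq_right this]
  rw [hz, add_zero]
  apply Finset.sum_congr rfl
  intro j hj'
  have hjle : (j:ℝ) ≤ (j₀:ℝ) := by
    have := Nat.lt_succ_iff.mp (Finset.mem_range.mp hj')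
    exact_mod_cast this
  have : 0 ≤ u - (j:ℝ)/(Mn:ℝ) := by
    have : (j:ℝ)/(Mn:ℝ) ≤ (j₀:ℝ)/(Mn:ℝ) := by
      gcongr
    linarith
  rw [max_eq_left this]

lemma sum_ct (Mn : ℕ) : ∀ j₀ : ℕ, ∑ j ∈ range (j₀+1), ct Mn j = (-1)^j₀ * (Mn:ℝ) := by
  intro j₀
  induction j₀ with
  | zero => simp [ct]
  | succ n ih =>
    rw [Finset.sum_range_succ, ih]
    show _ + ct Mn (n+1) = _
    rw [ct]
    push_cast
    ring

lemma sum_ct_j (Mn : ℕ) (hM : (Mn:ℝ) ≠ 0) : ∀ j₀ : ℕ,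
    ∑ j ∈ range (j₀+1), ct Mn j * ((j:ℝ)/(Mn:ℝ))
      = ((-1)^j₀*(2*(j₀:ℝ)+1) - 1)/2 := by
  intro j₀
  induction j₀ with
  | zero => simp [ct]
  | succ n ih =>
    rw [Finset.sum_range_succ, ih]
    show _ + ct Mn (n+1) * _ = _
    rw [ct]
    push_cast
    field_simp
    ring

lemma sum_cq (Mn : ℕ) : ∀ j₀ : ℕ, ∑ j ∈ range (j₀+1), cq Mn j
    = ((Mn:ℝ) - 2*(j₀:ℝ) - 1)/(Mn:ℝ) := by
  intro j₀
  induction j₀ with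
  | zero => simp [cq]
  | succ n ih =>
    rw [Finset.sum_range_succ, ih]
    show _ + cq Mn (n+1) = _
    rw [cq]
    push_cast
    ring

lemma sum_cq_j (Mn : ℕ) : ∀ j₀ : ℕ,
    ∑ j ∈ range (j₀+1), cq Mn j * ((j:ℝ)/(Mn:ℝ))
      = -((j₀:ℝ)*((j₀:ℝ)+1))/(Mn:ℝ)^2 := by
  intro j₀
  induction j₀ with
  | zero => simp [cq]
  | succ n ih =>
    rw [Finset.sum_range_succ, ih]
    show _ + cq Mn (n+1) * _ = _
    rw [cq]
    push_cast
    field_simp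
    ring

lemma Tnet_on_cell (hM : 0 < Mn) (hj : j₀ < Mn)
    (h1 : (j₀:ℝ)/(Mn:ℝ) ≤ u) (h2 : u ≤ ((j₀:ℝ)+1)/(Mn:ℝ)) :
    Tnet Mn u = (-1)^j₀ * ((Mn:ℝ)*u) - ((-1)^j₀*(2*(j₀:ℝ)+1) - 1)/2 := by
  have hM' : (Mn:ℝ) ≠ 0 := by positivity
  rw [Tnet, net_on_cell _ hM hj h1 h2]
  have : ∀ j ∈ range (j₀+1), ct Mn j * (u - (j:ℝ)/(Mn:ℝ))
      = ct Mn j * u - ct Mn j * ((j:ℝ)/(Mn:ℝ)) := by intro j _; ring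
  rw [Finset.sum_congr rfl this, Finset.sum_sub_distrib, ← Finset.sum_mul,
    sum_ct, sum_ct_j Mn hM']
  ring

lemma Qnet_on_cell (hM : 0 < Mn) (hj : j₀ < Mn)
    (h1 : (j₀:ℝ)/(Mn:ℝ) ≤ u) (h2 : u ≤ ((j₀:ℝ)+1)/(Mn:ℝ)) :
    Qnet Mn u = (((Mn:ℝ) - 2*(j₀:ℝ) - 1)/(Mn:ℝ))*u + ((j₀:ℝ)*((j₀:ℝ)+1))/(Mn:ℝ)^2 := by
  rw [Qnet, net_on_cell _ hM hj h1 h2]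
  have : ∀ j ∈ range (j₀+1), cq Mn j * (u - (j:ℝ)/(Mn:ℝ))
      = cq Mn j * u - cq Mn j * ((j:ℝ)/(Mn:ℝ)) := by intro j _; ring
  rw [Finset.sum_congr rfl this, Finset.sum_sub_distrib, ← Finset.sum_mul,
    sum_cq, sum_cq_j Mn]
  ring

end Cell

/-- key properties of `Tnet` and `Qnet` on `[0,1]`. -/
lemma Tnet_mem (Mn : ℕ) (hM : 0 < Mn) {u : ℝ} (hu : u ∈ Set.Icc (0:ℝ) 1) :
    Tnet Mn u ∈ Set.Icc (0:ℝ) 1 := by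
  obtain ⟨j₀, hj, h1, h2⟩ := exists_cell Mn hM hu
  have hMpos : (0:ℝ) < (Mn:ℝ) := by exact_mod_cast hM
  rw [Tnet_on_cell hM hj h1 h2]
  have hl : (j₀:ℝ) ≤ (Mn:ℝ)*u := by
    rw [div_le_iff₀ hMpos] at h1; linarith
  have hr : (Mn:ℝ)*u ≤ (j₀:ℝ)+1 := by
    rw [le_div_iff₀ hMpos] at h2; linarith
  rcases Nat.even_or_odd j₀ with he | ho
  · rw [he.neg_one_pow]
    constructor <;> [skip; skip] <;> simp <;> linarith
  · rw [ho.neg_one_pow]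
    constructor <;> simp <;> linarith

lemma TQ_identity (Mn : ℕ) (hM : 0 < Mn) {u : ℝ} (hu : u ∈ Set.Icc (0:ℝ) 1) :
    (u - u^2) - (Tnet Mn u - (Tnet Mn u)^2)/(Mn:ℝ)^2 = Qnet Mn u := by
  obtain ⟨j₀, hj, h1, h2⟩ := exists_cell Mn hM hu
  have hM' : (Mn:ℝ) ≠ 0 := by positivity
  rw [Tnet_on_cell hM hj h1 h2, Qnet_on_cell hM hj h1 h2]
  rcases Nat.even_or_odd j₀ with he | ho
  · rw [he.neg_one_pow]
    field_simp
    ring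
  · rw [ho.neg_one_pow]
    field_simp
    ring


/-- initial values of the three squaring units of a multiplication block. -/
def u0 (p q : ℝ) : Fin 3 → ℝ := ![(p+q)/2, p, q]

/-- sawtooth iteration within a block. -/
def Useq (Mn : ℕ) (p q : ℝ) (c : Fin 3) : ℕ → ℝ
  | 0 => u0 p q c
  | i+1 => Tnet Mn (Useq Mn p q c i)

/-- accumulator iteration within a block. -/
def Aseq (Mn : ℕ) (p q : ℝ) (c : Fin 3) : ℕ → ℝ
  | 0 => u0 p q c
  | i+1 => Aseq Mn p q c i - Qnet Mn (Useq Mn p q c i) / (Mn:ℝ)^(2*i)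

lemma u0_mem {p q : ℝ} (hp : p ∈ Set.Icc (0:ℝ) 1) (hq : q ∈ Set.Icc (0:ℝ) 1) (c : Fin 3) :
    u0 p q c ∈ Set.Icc (0:ℝ) 1 := by
  obtain ⟨hp0, hp1⟩ := hp; obtain ⟨hq0, hq1⟩ := hq
  fin_cases c <;> simp [u0] <;> constructor <;> linarith

lemma Useq_mem (Mn : ℕ) (hM : 0 < Mn) {p q : ℝ}
    (hp : p ∈ Set.Icc (0:ℝ) 1) (hq : q ∈ Set.Icc (0:ℝ) 1) (c : Fin 3) (i : ℕ) :
    Useq Mn p q c i ∈ Set.Icc (0:ℝ) 1 := by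
  induction i with
  | zero => exact u0_mem hp hq c
  | succ i ih => exact Tnet_mem Mn hM ih

/-- the central invariant: the accumulator equals the square plus a small residual. -/
lemma Aseq_eq (Mn : ℕ) (hM : 0 < Mn) {p q : ℝ}
    (hp : p ∈ Set.Icc (0:ℝ) 1) (hq : q ∈ Set.Icc (0:ℝ) 1) (c : Fin 3) (i : ℕ) :
    Aseq Mn p q c i = (u0 p q c)^2
      + (Useq Mn p q c i - (Useq Mn p q c i)^2) / (Mn:ℝ)^(2*i) := by
  have hM' : (Mn:ℝ) ≠ 0 := by positivity
  induction i with
  | zero => simp [Aseq, Useq]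
  | succ i ih =>
    rw [Aseq, ih]
    have hu := Useq_mem Mn hM hp hq c i
    have hid := TQ_identity Mn hM hu
    have : Qnet Mn (Useq Mn p q c i)
        = (Useq Mn p q c i - (Useq Mn p q c i)^2)
          - (Useq Mn p q c (i+1) - (Useq Mn p q c (i+1))^2)/(Mn:ℝ)^2 := by
      rw [Useq]; linarith
    rw [this]
    have h1 : ((Mn:ℝ))^(2*(i+1)) = (Mn:ℝ)^(2*i) * (Mn:ℝ)^2 := by ring
    field_simp [h1]
    ring

lemma Aseq_nonneg (Mn : ℕ) (hM : 0 < Mn) {p q : ℝ}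
    (hp : p ∈ Set.Icc (0:ℝ) 1) (hq : q ∈ Set.Icc (0:ℝ) 1) (c : Fin 3) (i : ℕ) :
    0 ≤ Aseq Mn p q c i := by
  rw [Aseq_eq Mn hM hp hq c i]
  have hu := Useq_mem Mn hM hp hq c i
  have : 0 ≤ Useq Mn p q c i - (Useq Mn p q c i)^2 := by nlinarith [hu.1, hu.2]
  positivity

/-- output of one multiplication block. -/
def blockOut (Mn s : ℕ) (p q : ℝ) : ℝ :=
  2 * Aseq Mn p q 0 s - Aseq Mn p q 1 s / 2 - Aseq Mn p q 2 s / 2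

lemma blockOut_err (Mn s : ℕ) (hM : 0 < Mn) {p q : ℝ}
    (hp : p ∈ Set.Icc (0:ℝ) 1) (hq : q ∈ Set.Icc (0:ℝ) 1) :
    |blockOut Mn s p q - p * q| ≤ 1/(Mn:ℝ)^(2*s) := by
  have hMpos : (0:ℝ) < (Mn:ℝ) := by exact_mod_cast hM
  rw [blockOut, Aseq_eq Mn hM hp hq 0 s, Aseq_eq Mn hM hp hq 1 s, Aseq_eq Mn hM hp hq 2 s]
  have key : ∀ c : Fin 3, |Useq Mn p q c s - (Useq Mn p q c s)^2| ≤ 1/4 := by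
    intro c
    have hu := Useq_mem Mn hM hp hq c s
    rw [abs_le]
    constructor <;> nlinarith [hu.1, hu.2, sq_nonneg (Useq Mn p q c s - 1/2)]
  have hsq : (2:ℝ) * (u0 p q 0)^2 - (u0 p q 1)^2/2 - (u0 p q 2)^2/2 = p * q := by
    simp [u0]; ring
  have h0 := abs_le.mp (key 0); have h1 := abs_le.mp (key 1); have h2 := abs_le.mp (key 2)
  have hpow : (0:ℝ) < (Mn:ℝ)^(2*s) := by positivity
  set r0 := Useq Mn p q 0 s - (Useq Mn p q 0 s)^2 with hr0
  set r1 := Useq Mn p q 1 s - (Useq Mn p q 1 s)^2 with hr1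
  set r2 := Useq Mn p q 2 s - (Useq Mn p q 2 s)^2 with hr2
  have heq : 2 * ((u0 p q 0)^2 + r0 / (Mn:ℝ)^(2*s))
      - ((u0 p q 1)^2 + r1 / (Mn:ℝ)^(2*s)) / 2
      - ((u0 p q 2)^2 + r2 / (Mn:ℝ)^(2*s)) / 2 - p * q
      = (2*r0 - r1/2 - r2/2) / (Mn:ℝ)^(2*s) := by
    rw [← hsq]
    field_simp
    ring
  rw [heq, abs_div, abs_of_pos hpow]
  have hnum : |2*r0 - r1/2 - r2/2| ≤ 1 := by
    rw [abs_le]; constructor <;> linarith [h0.1, h0.2, h1.1, h1.2, h2.1, h2.2]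
  calc |2*r0 - r1/2 - r2/2| / (Mn:ℝ)^(2*s) ≤ 1 / (Mn:ℝ)^(2*s) := by gcongr
    _ = 1/(Mn:ℝ)^(2*s) := rfl

def clip (z : ℝ) : ℝ := max z 0 - max (z-1) 0

lemma clip_mem (z : ℝ) : clip z ∈ Set.Icc (0:ℝ) 1 := by
  rw [clip]
  rcases le_or_gt z 0 with h | h
  · rw [max_eq_right h, max_eq_right (by linarith)]; norm_num
  · rcases le_or_gt z 1 with h' | h'
    · rw [max_eq_left h.le, max_eq_right (by linarith)]
      constructor <;> linarith
    · rw [max_eq_left h.le, max_eq_left (by linarith)]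
      norm_num

lemma clip_contract (z t : ℝ) (ht : t ∈ Set.Icc (0:ℝ) 1) : |clip z - t| ≤ |z - t| := by
  obtain ⟨ht0, ht1⟩ := ht
  rcases le_or_gt z 0 with h | h
  · have hc : clip z = 0 := by
      rw [clip, max_eq_right h, max_eq_right (by linarith)]; ring
    rw [hc, abs_of_nonpos (by linarith), abs_of_nonpos (by linarith)]; linarith
  · rcases le_or_gt z 1 with h' | h'
    · have hc : clip z = z := by
        rw [clip, max_eq_left h.le, max_eq_right (by linarith)]; ring
      rw [hc]
    · have hc : clip z = 1 := by
        rw [clip, max_eq_left h.le, max_eq_left (by linarith)]; ring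
      rw [hc, abs_of_nonneg (by linarith), abs_of_nonneg (by linarith)]; linarith

/-- the chain of multiplication blocks. -/
def Z (Mn s : ℕ) (xe : ℕ → ℝ) : ℕ → ℝ
  | 0 => xe 0
  | j+1 => blockOut Mn s (clip (Z Mn s xe j)) (xe (j+1))

lemma chain_err (Mn s : ℕ) (hM : 0 < Mn) (xe : ℕ → ℝ)
    (hxe : ∀ i, xe i ∈ Set.Icc (0:ℝ) 1) (j : ℕ) :
    |Z Mn s xe j - ∏ i ∈ range (j+1), xe i| ≤ (j:ℝ) * (1/(Mn:ℝ)^(2*s)) := by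
  induction j with
  | zero => simp [Z]
  | succ j ih =>
    have hprod : (∏ i ∈ range (j+1), xe i) ∈ Set.Icc (0:ℝ) 1 := by
      constructor
      · exact Finset.prod_nonneg fun i _ => (hxe i).1
      · exact Finset.prod_le_one (fun i _ => (hxe i).1) (fun i _ => (hxe i).2)
    have hclip := clip_mem (Z Mn s xe j)
    have hblk := blockOut_err Mn s hM hclip (hxe (j+1))
    have hcontract := clip_contract (Z Mn s xe j) _ hprod
    have h1 : |clip (Z Mn s xe j) * xe (j+1) - (∏ i ∈ range (j+1), xe i) * xe (j+1)|
        ≤ (j:ℝ) * (1/(Mn:ℝ)^(2*s)) := by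
      rw [← sub_mul, abs_mul]
      calc |clip (Z Mn s xe j) - ∏ i ∈ range (j+1), xe i| * |xe (j+1)|
          ≤ |Z Mn s xe j - ∏ i ∈ range (j+1), xe i| * 1 := by
            apply mul_le_mul hcontract _ (abs_nonneg _) (abs_nonneg _)
            rw [abs_of_nonneg (hxe (j+1)).1]; exact (hxe (j+1)).2
        _ ≤ (j:ℝ) * (1/(Mn:ℝ)^(2*s)) := by rw [mul_one]; exact ih
    have hsplit : Z Mn s xe (j+1) - ∏ i ∈ range (j+1+1), xe i
        = (blockOut Mn s (clip (Z Mn s xe j)) (xe (j+1)) - clip (Z Mn s xe j) * xe (j+1))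
          + (clip (Z Mn s xe j) * xe (j+1) - (∏ i ∈ range (j+1), xe i) * xe (j+1)) := by
      rw [Finset.prod_range_succ]
      show Z Mn s xe (j+1) - _ = _
      rw [Z]
      ring
    rw [hsplit]
    calc |_ + _| ≤ _ + _ := abs_add_le _ _
      _ ≤ 1/(Mn:ℝ)^(2*s) + (j:ℝ) * (1/(Mn:ℝ)^(2*s)) := add_le_add hblk h1
      _ = ((j:ℝ)+1) * (1/(Mn:ℝ)^(2*s)) := by ring
      _ = (((j+1):ℕ):ℝ) * (1/(Mn:ℝ)^(2*s)) := by push_cast; ring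


/-! ### the network -/

/-- structured index type for hidden layers. -/
abbrev Sty (k Mn : ℕ) := Fin k ⊕ (Fin 3 × Fin (Mn+1))

def eqv (k Mn : ℕ) : Sty k Mn ≃ Fin (k + 3*(Mn+1)) :=
  (Equiv.sumCongr (Equiv.refl _) finProdFinEquiv).trans finSumFinEquiv

section Layers
variable {k Mn : ℕ}

/-- the affine combination producing the product estimate. -/
def zval (w : Sty k Mn → ℝ) : ℝ :=
  2 * w (Sum.inr (0,0)) - w (Sum.inr (1,0)) / 2 - w (Sum.inr (2,0)) / 2

def Tcombo (c : Fin 3) (w : Sty k Mn → ℝ) : ℝ :=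
  ∑ j : Fin Mn, ct Mn (j:ℕ) * w (Sum.inr (c, j.succ))

def Qcombo (c : Fin 3) (w : Sty k Mn → ℝ) : ℝ :=
  ∑ j : Fin Mn, cq Mn (j:ℕ) * w (Sum.inr (c, j.succ))

/-- the clipping layer. -/
def clipG (w : Sty k Mn → ℝ) : Sty k Mn → ℝ :=
  fun idx => match idx with
  | Sum.inl t => w (Sum.inl t)
  | Sum.inr (c, j) =>
      if (j:ℕ) = 0 then
        if c = 0 then zval w else if c = 1 then zval w - 1 else 0
      else 0

/-- the block-initialization layer. -/
def initG (t0 : Fin k) (w : Sty k Mn → ℝ) : Sty k Mn → ℝ :=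
  fun idx => match idx with
  | Sum.inl t => w (Sum.inl t)
  | Sum.inr (c, j) =>
      (if (j:ℕ) = 0 then (0:ℝ) else -((((j:ℕ) - 1 : ℕ):ℝ)/(Mn:ℝ))) +
      (if c = 0 then ((w (Sum.inr (0,0)) - w (Sum.inr (1,0))) + w (Sum.inl t0))/2
       else if c = 1 then w (Sum.inr (0,0)) - w (Sum.inr (1,0))
       else w (Sum.inl t0))

/-- the sawtooth-step layer. -/
def stepG (i : ℕ) (w : Sty k Mn → ℝ) : Sty k Mn → ℝ :=
  fun idx => match idx with
  | Sum.inl t => w (Sum.inl t)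
  | Sum.inr (c, j) =>
      if (j:ℕ) = 0 then w (Sum.inr (c, 0)) - Qcombo c w / (Mn:ℝ)^(2*i)
      else Tcombo c w - (((j:ℕ) - 1 : ℕ):ℝ)/(Mn:ℝ)

/-- the input map. -/
def inG (hk : 0 < k) (x : Fin k → ℝ) : Sty k Mn → ℝ :=
  fun idx => match idx with
  | Sum.inl t => x t
  | Sum.inr (c, j) =>
      if (j:ℕ) = 0 then
        (if c = 0 then x ⟨0, hk⟩ else if c = 1 then x ⟨0, hk⟩ - 1 else 0)
      else 0

lemma AffS.div {ι : Type*} [Fintype ι] {f : (ι → ℝ) → ℝ} (hf : AffS f) (d : ℝ) :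
    AffS (fun w => f w / d) := by
  have := hf.smul d⁻¹
  simpa [div_eq_inv_mul] using this

lemma affS_zval : AffS (zval (k := k) (Mn := Mn)) := by
  have h0 : AffS (fun w : Sty k Mn → ℝ => w (Sum.inr (0,0))) := AffS.eval _
  have h1 : AffS (fun w : Sty k Mn → ℝ => w (Sum.inr (1,0))) := AffS.eval _
  have h2 : AffS (fun w : Sty k Mn → ℝ => w (Sum.inr (2,0))) := AffS.eval _
  exact ((h0.smul 2).sub (h1.div 2)).sub (h2.div 2)

lemma affS_Tcombo (c : Fin 3) : AffS (Tcombo (k := k) (Mn := Mn) c) :=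
  AffS.sum _ _ (fun j _ => (AffS.eval (Sum.inr (c, j.succ))).smul _)

lemma affS_Qcombo (c : Fin 3) : AffS (Qcombo (k := k) (Mn := Mn) c) :=
  AffS.sum _ _ (fun j _ => (AffS.eval (Sum.inr (c, j.succ))).smul _)

lemma affS_clipG (i : Sty k Mn) : AffS (fun w => clipG w i) := by
  rcases i with t | ⟨c, j⟩
  · exact AffS.eval _
  · show AffS (fun w => if (j:ℕ) = 0 then
        (if c = 0 then zval w else if c = 1 then zval w - 1 else 0) else 0)
    by_cases hj : (j:ℕ) = 0
    · simp only [if_pos hj]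
      by_cases hc : c = 0
      · simp only [if_pos hc]; exact affS_zval
      · simp only [if_neg hc]
        by_cases hc1 : c = 1
        · simp only [if_pos hc1]; exact affS_zval.sub (AffS.const 1)
        · simp only [if_neg hc1]; exact AffS.const 0
    · simp only [if_neg hj]; exact AffS.const 0

lemma affS_initG (t0 : Fin k) (i : Sty k Mn) : AffS (fun w => initG t0 w i) := by
  rcases i with t | ⟨c, j⟩
  · exact AffS.eval _
  · show AffS (fun w => _ + _)
    apply (AffS.const _).add
    have h0 : AffS (fun w : Sty k Mn → ℝ => w (Sum.inr (0,0))) := AffS.eval _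
    have h1 : AffS (fun w : Sty k Mn → ℝ => w (Sum.inr (1,0))) := AffS.eval _
    have hξ : AffS (fun w : Sty k Mn → ℝ => w (Sum.inl t0)) := AffS.eval _
    by_cases hc : c = 0
    · simp only [if_pos hc]; exact ((h0.sub h1).add hξ).div 2
    · simp only [if_neg hc]
      by_cases hc1 : c = 1
      · simp only [if_pos hc1]; exact h0.sub h1
      · simp only [if_neg hc1]; exact hξ

lemma affS_stepG (i : ℕ) (idx : Sty k Mn) : AffS (fun w => stepG i w idx) := by
  rcases idx with t | ⟨c, j⟩
  · exact AffS.eval _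
  · show AffS (fun w => if (j:ℕ) = 0 then w (Sum.inr (c, 0)) - Qcombo c w / (Mn:ℝ)^(2*i)
      else Tcombo c w - (((j:ℕ) - 1 : ℕ):ℝ)/(Mn:ℝ))
    by_cases hj : (j:ℕ) = 0
    · simp only [if_pos hj]; exact (AffS.eval _).sub ((affS_Qcombo c).div _)
    · simp only [if_neg hj]; exact (affS_Tcombo c).sub (AffS.const _)

lemma affS_inG (hk : 0 < k) (i : Sty k Mn) : AffS (fun x : Fin k → ℝ => inG hk x i) := by
  rcases i with t | ⟨c, j⟩
  · exact AffS.eval _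
  · show AffS (fun x : Fin k → ℝ => if (j:ℕ) = 0 then
        (if c = 0 then x ⟨0, hk⟩ else if c = 1 then x ⟨0, hk⟩ - 1 else 0) else 0)
    by_cases hj : (j:ℕ) = 0
    · simp only [if_pos hj]
      by_cases hc : c = 0
      · simp only [if_pos hc]; exact AffS.eval _
      · simp only [if_neg hc]
        by_cases hc1 : c = 1
        · simp only [if_pos hc1]; exact (AffS.eval _).sub (AffS.const 1)
        · simp only [if_neg hc1]; exact AffS.const 0
    · simp only [if_neg hj]; exact AffS.const 0

end Layers

section Lift
variable {k Mn : ℕ}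

def lift (G : (Sty k Mn → ℝ) → Sty k Mn → ℝ) :
    (Fin (k + 3*(Mn+1)) → ℝ) → Fin (k + 3*(Mn+1)) → ℝ :=
  fun v i => G (fun s => v (eqv k Mn s)) ((eqv k Mn).symm i)

lemma lift_apply_eqv (G : (Sty k Mn → ℝ) → Sty k Mn → ℝ) (v) (s : Sty k Mn) :
    lift G v (eqv k Mn s) = G (fun s' => v (eqv k Mn s')) s := by
  simp [lift]

lemma reindex_sum (c : Sty k Mn → ℝ) (v : Fin (k + 3*(Mn+1)) → ℝ) :
    ∑ j : Sty k Mn, c j * v (eqv k Mn j)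
      = ∑ i : Fin (k + 3*(Mn+1)), c ((eqv k Mn).symm i) * v i := by
  rw [← Equiv.sum_comp (eqv k Mn) (fun i => c ((eqv k Mn).symm i) * v i)]
  simp

lemma lift_isAffine (G : (Sty k Mn → ℝ) → Sty k Mn → ℝ)
    (h : ∀ i, AffS (fun w => G w i)) :
    IsAffineMap (k + 3*(Mn+1)) (k + 3*(Mn+1)) (lift G) := by
  apply isAffineMap_of_rows
  intro i
  obtain ⟨c, b, hc⟩ := h ((eqv k Mn).symm i)
  refine ⟨fun j => c ((eqv k Mn).symm j), b, fun v => ?_⟩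
  show G (fun s => v (eqv k Mn s)) ((eqv k Mn).symm i) = _
  rw [show G (fun s => v (eqv k Mn s)) ((eqv k Mn).symm i)
      = ∑ j : Sty k Mn, c j * v (eqv k Mn j) + b from hc _, reindex_sum]

lemma liftIn_isAffine (hk : 0 < k) :
    IsAffineMap k (k + 3*(Mn+1)) (fun x i => inG (Mn := Mn) hk x ((eqv k Mn).symm i)) := by
  apply isAffineMap_of_rows
  intro i
  exact affS_inG hk _

lemma liftOut_isAffine :
    IsAffineMap (k + 3*(Mn+1)) 1
      (fun (v : Fin (k + 3*(Mn+1)) → ℝ) (_ : Fin 1) => zval (fun s => v (eqv k Mn s))) := by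
  apply isAffineMap_of_rows
  intro _
  obtain ⟨c, b, hc⟩ := affS_zval (k := k) (Mn := Mn)
  refine ⟨fun j => c ((eqv k Mn).symm j), b, fun v => ?_⟩
  show zval (fun s => v (eqv k Mn s)) = _
  rw [hc, reindex_sum]

end Lift

/-! ### layer schedule and semantics -/

section Sem
variable (k Mn s : ℕ)

/-- clamped index into `Fin k`. -/
def fidx {k : ℕ} (hk : 0 < k) (a : ℕ) : Fin k := ⟨min a (k-1), by omega⟩

/-- layer schedule: period `s+2`, pattern `[init, step 0, …, step (s-1), clip]` after the
initial clip layer. -/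
def Bfun (hk : 0 < k) (ℓ : ℕ) : (Fin (k+3*(Mn+1)) → ℝ) → Fin (k+3*(Mn+1)) → ℝ :=
  if (ℓ+1) % (s+2) = 0 then lift clipG
  else if (ℓ+1) % (s+2) = 1 then
    lift (initG (fidx hk ((ℓ+1)/(s+2) + 1)))
  else lift (stepG ((ℓ+1) % (s+2) - 2))

lemma Bfun_affine (hk : 0 < k) (ℓ : ℕ) :
    IsAffineMap (k+3*(Mn+1)) (k+3*(Mn+1)) (Bfun k Mn s hk ℓ) := by
  unfold Bfun
  split_ifs
  · exact lift_isAffine _ affS_clipG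
  · exact lift_isAffine _ (affS_initG _)
  · exact lift_isAffine _ (affS_stepG _)

variable (x : Fin k → ℝ)

/-- inputs extended by `1`s. -/
def xev (j : ℕ) : ℝ := if h : j < k then x ⟨j, h⟩ else 1

/-- hidden state right after a clipping layer. -/
def clipDesc (j : ℕ) : Sty k Mn → ℝ :=
  fun idx => match idx with
  | Sum.inl t => x t
  | Sum.inr (c, jj) =>
      if (jj:ℕ) = 0 then
        (if c = 0 then max (Z Mn s (xev k x) j) 0
         else if c = 1 then max (Z Mn s (xev k x) j - 1) 0 else 0)
      else 0

/-- hidden state after `i` sawtooth steps in block `j`. -/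
def sawDesc (j i : ℕ) : Sty k Mn → ℝ :=
  fun idx => match idx with
  | Sum.inl t => x t
  | Sum.inr (c, jj) =>
      if (jj:ℕ) = 0 then Aseq Mn (clip (Z Mn s (xev k x) j)) (xev k x (j+1)) c i
      else max (Useq Mn (clip (Z Mn s (xev k x) j)) (xev k x (j+1)) c i
        - (((jj:ℕ)-1:ℕ):ℝ)/(Mn:ℝ)) 0

def v0 (hk : 0 < k) : Fin (k+3*(Mn+1)) → ℝ :=
  fun i => max (inG (Mn := Mn) hk x ((eqv k Mn).symm i)) 0

def wst (hk : 0 < k) (ℓ : ℕ) : Sty k Mn → ℝ :=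
  fun sIdx => itr (Bfun k Mn s hk) ℓ (v0 k Mn x hk) (eqv k Mn sIdx)

variable {k Mn s x}

lemma hx01 (hx : x ∈ Set.Icc (0:(Fin k → ℝ)) 1) (t : Fin k) : x t ∈ Set.Icc (0:ℝ) 1 :=
  ⟨hx.1 t, hx.2 t⟩

lemma xev_mem (hx : x ∈ Set.Icc (0:(Fin k → ℝ)) 1) (j : ℕ) :
    xev k x j ∈ Set.Icc (0:ℝ) 1 := by
  rw [xev]
  split_ifs with h
  · exact hx01 hx _
  · norm_num

lemma wst_zero (hk : 0 < k) (hx : x ∈ Set.Icc (0:(Fin k → ℝ)) 1) :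
    wst k Mn s x hk 0 = clipDesc k Mn s x 0 := by
  funext sIdx
  show max (inG hk x ((eqv k Mn).symm (eqv k Mn sIdx))) 0 = _
  rw [Equiv.symm_apply_apply]
  have hZ0 : Z Mn s (xev k x) 0 = x ⟨0, hk⟩ := by
    rw [Z, xev, dif_pos hk]
  rcases sIdx with t | ⟨c, jj⟩
  · exact max_eq_left (hx.1 t)
  · show (if (jj:ℕ) = 0 then
        (if c = 0 then x ⟨0, hk⟩ else if c = 1 then x ⟨0, hk⟩ - 1 else 0) else 0) ⊔ 0 = _
    show _ = clipDesc k Mn s x 0 (Sum.inr (c, jj))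
    rw [clipDesc, hZ0]
    by_cases hj : (jj:ℕ) = 0
    · simp only [if_pos hj]
      by_cases hc : c = 0
      · simp only [if_pos hc]
      · simp only [if_neg hc]
        by_cases hc1 : c = 1
        · simp only [if_pos hc1]
        · simp only [if_neg hc1]
          exact max_self 0
    · simp only [if_neg hj]
      exact max_self 0

lemma wst_succ (hk : 0 < k) (ℓ : ℕ) (G : (Sty k Mn → ℝ) → Sty k Mn → ℝ)
    (hG : Bfun k Mn s hk ℓ = lift G) :
    wst k Mn s x hk (ℓ+1) = fun sIdx => max (G (wst k Mn s x hk ℓ) sIdx) 0 := by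
  funext sIdx
  show max ((Bfun k Mn s hk ℓ) (itr (Bfun k Mn s hk) ℓ (v0 k Mn x hk)) (eqv k Mn sIdx)) 0 = _
  rw [hG, lift_apply_eqv]
  rfl

lemma Tcombo_eval (c : Fin 3) (U : ℝ) (w : Sty k Mn → ℝ)
    (hw : ∀ jj : Fin Mn, w (Sum.inr (c, jj.succ)) = max (U - (jj:ℝ)/(Mn:ℝ)) 0) :
    Tcombo c w = Tnet Mn U := by
  rw [Tcombo, Tnet,
    ← Fin.sum_univ_eq_sum_range (fun j => ct Mn j * max (U - (j:ℝ)/(Mn:ℝ)) 0) Mn]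
  exact Finset.sum_congr rfl fun jj _ => by rw [hw jj]

lemma Qcombo_eval (c : Fin 3) (U : ℝ) (w : Sty k Mn → ℝ)
    (hw : ∀ jj : Fin Mn, w (Sum.inr (c, jj.succ)) = max (U - (jj:ℝ)/(Mn:ℝ)) 0) :
    Qcombo c w = Qnet Mn U := by
  rw [Qcombo, Qnet,
    ← Fin.sum_univ_eq_sum_range (fun j => cq Mn j * max (U - (j:ℝ)/(Mn:ℝ)) 0) Mn]
  exact Finset.sum_congr rfl fun jj _ => by rw [hw jj]

lemma sawDesc_succ_slot (j i : ℕ) (c : Fin 3) (jj : Fin Mn) :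
    sawDesc k Mn s x j i (Sum.inr (c, jj.succ))
      = max (Useq Mn (clip (Z Mn s (xev k x) j)) (xev k x (j+1)) c i - (jj:ℝ)/(Mn:ℝ)) 0 := by
  rw [sawDesc]
  have h1 : ((jj.succ : Fin (Mn+1)):ℕ) = (jj:ℕ)+1 := Fin.val_succ jj
  rw [h1]
  simp

/-- applying the clipping layer to the final sawtooth state of block `j`. -/
lemma clip_step (hM : 0 < Mn) (hx : x ∈ Set.Icc (0:(Fin k → ℝ)) 1) (j : ℕ) :
    (fun sIdx => max (clipG (sawDesc k Mn s x j s) sIdx) 0) = clipDesc k Mn s x (j+1) := by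
  have hz : zval (sawDesc k Mn s x j s) = Z Mn s (xev k x) (j+1) := by
    rw [zval]
    show 2 * sawDesc k Mn s x j s (Sum.inr (0,0)) - _ / 2 - _ / 2 = _
    rw [show Z Mn s (xev k x) (j+1)
        = blockOut Mn s (clip (Z Mn s (xev k x) j)) (xev k x (j+1)) from rfl, blockOut]
    rw [sawDesc, sawDesc, sawDesc]
    norm_num
  funext sIdx
  rcases sIdx with t | ⟨c, jj⟩
  · show max (sawDesc k Mn s x j s (Sum.inl t)) 0 = x t
    rw [sawDesc]
    exact max_eq_left (hx.1 t)
  · show max (if (jj:ℕ) = 0 then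
        (if c = 0 then zval (sawDesc k Mn s x j s)
         else if c = 1 then zval (sawDesc k Mn s x j s) - 1 else 0) else 0) 0 = _
    show _ = clipDesc k Mn s x (j+1) (Sum.inr (c, jj))
    rw [clipDesc, hz]
    by_cases hj : (jj:ℕ) = 0
    · simp only [if_pos hj]
      by_cases hc : c = 0
      · simp only [if_pos hc]
      · simp only [if_neg hc]
        by_cases hc1 : c = 1
        · simp only [if_pos hc1]
        · simp only [if_neg hc1]
          exact max_self 0
    · simp only [if_neg hj]
      exact max_self 0

/-- applying the initialization layer of block `j` to the clipped state. -/
lemma init_step (hM : 0 < Mn) (hx : x ∈ Set.Icc (0:(Fin k → ℝ)) 1)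
    (j : ℕ) (hj : j + 1 < k) :
    (fun sIdx => max (initG ⟨j+1, hj⟩ (clipDesc k Mn s x j) sIdx) 0)
      = sawDesc k Mn s x j 0 := by
  set p := clip (Z Mn s (xev k x) j) with hp
  set q := xev k x (j+1) with hq
  have hpm : p ∈ Set.Icc (0:ℝ) 1 := clip_mem _
  have hqm : q ∈ Set.Icc (0:ℝ) 1 := xev_mem hx _
  have hph : clipDesc k Mn s x j (Sum.inr (0,0)) - clipDesc k Mn s x j (Sum.inr (1,0)) = p := by
    rw [clipDesc, clipDesc, hp, clip]
    norm_num
  have hξ : clipDesc k Mn s x j (Sum.inl ⟨j+1, hj⟩) = q := by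
    rw [clipDesc, hq, xev, dif_pos hj]
  funext sIdx
  rcases sIdx with t | ⟨c, jj⟩
  · show max (clipDesc k Mn s x j (Sum.inl t)) 0 = _
    rw [clipDesc]
    show max (x t) 0 = sawDesc k Mn s x j 0 (Sum.inl t)
    rw [sawDesc]
    exact max_eq_left (hx.1 t)
  · show max ((if (jj:ℕ) = 0 then (0:ℝ) else -((((jj:ℕ) - 1 : ℕ):ℝ)/(Mn:ℝ))) +
      (if c = 0 then ((clipDesc k Mn s x j (Sum.inr (0,0))
            - clipDesc k Mn s x j (Sum.inr (1,0))) + clipDesc k Mn s x j (Sum.inl ⟨j+1, hj⟩))/2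
       else if c = 1 then clipDesc k Mn s x j (Sum.inr (0,0))
            - clipDesc k Mn s x j (Sum.inr (1,0))
       else clipDesc k Mn s x j (Sum.inl ⟨j+1, hj⟩))) 0 = _
    show _ = sawDesc k Mn s x j 0 (Sum.inr (c, jj))
    rw [sawDesc, hph, hξ]
    have hu0 : (if c = 0 then (p + q)/2 else if c = 1 then p else q) = u0 p q c := by
      fin_cases c <;> simp [u0]
    rw [hu0]
    have hU0 : Useq Mn p q c 0 = u0 p q c := rfl
    have hA0 : Aseq Mn p q c 0 = u0 p q c := rfl
    have hmem := u0_mem hpm hqm c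
    by_cases hj0 : (jj:ℕ) = 0
    · simp only [if_pos hj0, zero_add]
      rw [hA0]
      exact max_eq_left hmem.1
    · simp only [if_neg hj0]
      rw [hU0]
      rw [show -((((jj:ℕ) - 1 : ℕ):ℝ)/(Mn:ℝ)) + u0 p q c
        = u0 p q c - (((jj:ℕ) - 1 : ℕ):ℝ)/(Mn:ℝ) from by ring]

/-- applying sawtooth step `i` in block `j`. -/
lemma saw_step (hM : 0 < Mn) (hx : x ∈ Set.Icc (0:(Fin k → ℝ)) 1) (j i : ℕ) :
    (fun sIdx => max (stepG i (sawDesc k Mn s x j i) sIdx) 0)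
      = sawDesc k Mn s x j (i+1) := by
  set p := clip (Z Mn s (xev k x) j) with hp
  set q := xev k x (j+1) with hq
  have hpm : p ∈ Set.Icc (0:ℝ) 1 := clip_mem _
  have hqm : q ∈ Set.Icc (0:ℝ) 1 := xev_mem hx _
  have hT : ∀ c, Tcombo c (sawDesc k Mn s x j i) = Tnet Mn (Useq Mn p q c i) :=
    fun c => Tcombo_eval c _ _ (fun jj => sawDesc_succ_slot j i c jj)
  have hQ : ∀ c, Qcombo c (sawDesc k Mn s x j i) = Qnet Mn (Useq Mn p q c i) :=
    fun c => Qcombo_eval c _ _ (fun jj => sawDesc_succ_slot j i c jj)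
  funext sIdx
  rcases sIdx with t | ⟨c, jj⟩
  · show max (sawDesc k Mn s x j i (Sum.inl t)) 0 = _
    rw [sawDesc]
    show max (x t) 0 = sawDesc k Mn s x j (i+1) (Sum.inl t)
    rw [sawDesc]
    exact max_eq_left (hx.1 t)
  · show max (if (jj:ℕ) = 0 then sawDesc k Mn s x j i (Sum.inr (c, 0))
        - Qcombo c (sawDesc k Mn s x j i) / (Mn:ℝ)^(2*i)
      else Tcombo c (sawDesc k Mn s x j i) - (((jj:ℕ) - 1 : ℕ):ℝ)/(Mn:ℝ)) 0 = _
    show _ = sawDesc k Mn s x j (i+1) (Sum.inr (c, jj))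
    have hA : ∀ i', sawDesc k Mn s x j i' (Sum.inr (c, (0 : Fin (Mn+1)))) = Aseq Mn p q c i' := by
      intro i'
      show (if (((0 : Fin (Mn+1)):ℕ)) = 0 then
          Aseq Mn (clip (Z Mn s (xev k x) j)) (xev k x (j+1)) c i'
        else max (Useq Mn (clip (Z Mn s (xev k x) j)) (xev k x (j+1)) c i'
          - (((((0 : Fin (Mn+1)):ℕ))-1:ℕ):ℝ)/(Mn:ℝ)) 0) = Aseq Mn p q c i'
      rw [if_pos (by simp), ← hp, ← hq]
    by_cases hj0 : (jj:ℕ) = 0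
    · have hjj : jj = 0 := Fin.ext (by simpa using hj0)
      subst hjj
      simp only [if_pos hj0]
      rw [hA i, hA (i+1), hQ c]
      rw [show Aseq Mn p q c i - Qnet Mn (Useq Mn p q c i) / (Mn:ℝ)^(2*i)
        = Aseq Mn p q c (i+1) from rfl]
      exact max_eq_left (Aseq_nonneg Mn hM hpm hqm c (i+1))
    · simp only [if_neg hj0]
      have hU : sawDesc k Mn s x j (i+1) (Sum.inr (c, jj))
          = max (Useq Mn p q c (i+1) - (((jj:ℕ)-1:ℕ):ℝ)/(Mn:ℝ)) 0 := by
        show (if (jj:ℕ) = 0 then _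
            else max (Useq Mn (clip (Z Mn s (xev k x) j)) (xev k x (j+1)) c (i+1)
              - (((jj:ℕ)-1:ℕ):ℝ)/(Mn:ℝ)) 0) = _
        rw [if_neg hj0, ← hp, ← hq]
      rw [hU, hT c, show Tnet Mn (Useq Mn p q c i) = Useq Mn p q c (i+1) from rfl]

end Sem

/-! ### the induction over layers -/

section Induct
variable {k Mn s : ℕ} {x : Fin k → ℝ}

lemma Bfun_sel_clip (hk : 0 < k) (j : ℕ) :
    Bfun k Mn s hk (j*(s+2) + 1 + s) = lift clipG := by
  rw [Bfun, if_pos]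
  have h1 : j*(s+2) + 1 + s + 1 = (j+1)*(s+2) := by ring
  rw [h1, Nat.mul_mod_left]

lemma Bfun_sel_init (hk : 0 < k) (j : ℕ) (hj : j + 1 ≤ k - 1) :
    Bfun k Mn s hk (j*(s+2)) = lift (initG ⟨j+1, by omega⟩) := by
  have hmod : (j*(s+2) + 1) % (s+2) = 1 := by
    rw [mul_comm, Nat.mul_add_mod, Nat.mod_eq_of_lt (by omega)]
  have hdiv : (j*(s+2) + 1) / (s+2) = j := by
    rw [mul_comm, Nat.mul_add_div (by omega), Nat.div_eq_of_lt (by omega), Nat.add_zero]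
  rw [Bfun, if_neg (by omega), if_pos hmod, hdiv]
  have : fidx hk (j+1) = (⟨j+1, by omega⟩ : Fin k) :=
    Fin.ext (by show min (j+1) (k-1) = j+1; omega)
  rw [this]

lemma Bfun_sel_step (hk : 0 < k) (j i : ℕ) (hi : i + 1 ≤ s) :
    Bfun k Mn s hk (j*(s+2) + 1 + i) = lift (stepG i) := by
  have h1 : j*(s+2) + 1 + i + 1 = j*(s+2) + (i+2) := by ring
  have hmod : (j*(s+2) + (i+2)) % (s+2) = i+2 := by
    rw [mul_comm, Nat.mul_add_mod, Nat.mod_eq_of_lt (by omega)]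
  rw [Bfun, h1, hmod, if_neg (by omega), if_neg (by omega)]
  have h2 : i + 2 - 2 = i := by omega
  rw [h2]

lemma saw_states (hM : 0 < Mn) (hk : 0 < k) (hx : x ∈ Set.Icc (0:(Fin k → ℝ)) 1)
    (j : ℕ) (hj : j + 1 ≤ k - 1)
    (hC : wst k Mn s x hk (j*(s+2)) = clipDesc k Mn s x j) :
    ∀ i, i ≤ s → wst k Mn s x hk (j*(s+2) + 1 + i) = sawDesc k Mn s x j i := by
  intro i
  induction i with
  | zero =>
    intro _
    show wst k Mn s x hk (j*(s+2) + 1) = _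
    rw [wst_succ hk _ _ (Bfun_sel_init hk j hj), hC,
      init_step hM hx j (by omega)]
  | succ i ih =>
    intro hi
    have h1 : j*(s+2)+1+(i+1) = (j*(s+2)+1+i)+1 := by ring
    rw [h1, wst_succ hk _ _ (Bfun_sel_step hk j i hi), ih (by omega),
      saw_step hM hx j i]

lemma clip_states (hM : 0 < Mn) (hk : 0 < k) (hx : x ∈ Set.Icc (0:(Fin k → ℝ)) 1) :
    ∀ j, j ≤ k - 1 → wst k Mn s x hk (j*(s+2)) = clipDesc k Mn s x j := by
  intro j
  induction j with
  | zero =>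
    intro _
    rw [show 0*(s+2) = 0 from Nat.zero_mul _]
    exact wst_zero hk hx
  | succ j ih =>
    intro hj
    have hC := ih (by omega)
    have hsaw := saw_states hM hk hx j hj hC s le_rfl
    have h1 : (j+1)*(s+2) = (j*(s+2)+1+s)+1 := by ring
    rw [h1, wst_succ hk _ _ (Bfun_sel_clip hk j), hsaw, clip_step hM hx j]

end Induct

/-- the network function. -/
def φnet (k Mn s : ℕ) (hk : 0 < k) (x : Fin k → ℝ) : ℝ :=
  (fun v : Fin (k+3*(Mn+1)) → ℝ => zval (fun sIdx => v (eqv k Mn sIdx)))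
    (itr (Bfun k Mn s hk) ((k-2)*(s+2)+1+s)
      (fun i => max (inG hk x ((eqv k Mn).symm i)) 0))

lemma φnet_realized (k Mn s : ℕ) (hk : 0 < k) (W : ℝ)
    (hPW : ((k + 3*(Mn+1) : ℕ) : ℝ) ≤ W) :
    ReLUNetRec W ((k-2)*(s+2)+1+s+1) k (φnet k Mn s hk) :=
  build W (by omega) hPW _ k _ (liftIn_isAffine hk) _ (Bfun_affine k Mn s hk) _
    liftOut_isAffine

lemma φnet_eq (k Mn s : ℕ) (hk2 : 2 ≤ k) (hM : 0 < Mn)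
    (x : Fin k → ℝ) (hx : x ∈ Set.Icc (0:(Fin k → ℝ)) 1) :
    φnet k Mn s (by omega) x = Z Mn s (xev k x) (k-1) := by
  have hk : 0 < k := by omega
  have hfin := saw_states (x := x) hM hk hx (k-2) (by omega)
    (clip_states hM hk hx (k-2) (by omega)) s le_rfl
  have : φnet k Mn s hk x = zval (wst k Mn s x hk ((k-2)*(s+2)+1+s)) := rfl
  rw [show (φnet k Mn s (by omega : 0 < k) x) = zval (wst k Mn s x hk ((k-2)*(s+2)+1+s))
    from rfl, hfin]
  have hz : zval (sawDesc k Mn s x (k-2) s)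
      = blockOut Mn s (clip (Z Mn s (xev k x) (k-2))) (xev k x (k-2+1)) := by
    rw [zval, blockOut]
    show 2 * sawDesc k Mn s x (k-2) s (Sum.inr (0,0)) - _ / 2 - _ / 2 = _
    rw [sawDesc, sawDesc, sawDesc]
    norm_num
  rw [hz, show k-1 = (k-2)+1 from by omega]
  rfl

end RP

/-- Lemma 5.3: ReLU FNNs of width `9(N+1)+k-1` and depth `7kL(k-1)` approximate
`x₁x₂⋯x_k` on `[0,1]^k` within `9(k-1)(N+1)^{-7kL}`. -/
theorem relu_approx_multi_product
    (N L k : ℕ) (hN : 0 < N) (hL : 0 < L) (hk : 2 ≤ k) :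
    ∃ φ : (Fin k → ℝ) → ℝ,
      ImplementedBy k (9 * ((N : ℝ) + 1) + k - 1) (7 * (k : ℝ) * L * ((k : ℝ) - 1)) φ ∧
      ∀ x ∈ unitCube k,
        |φ x - ∏ i, x i| ≤ 9 * ((k : ℝ) - 1) * ((N : ℝ) + 1) ^ (-(7 * (k : ℝ) * L)) := by
  classical
  have hk0 : 0 < k := by omega
  set Mn := N + 1 with hMn
  set K7 := 7*k*L with hK7
  have hK7ge : 14 ≤ K7 := by
    have h1 : 7*2*1 ≤ 7*k*L := by
      apply Nat.mul_le_mul (Nat.mul_le_mul le_rfl hk) hL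
    omega
  set s := K7 - 2 with hs
  have hs2 : s + 2 = K7 := by omega
  have hM : 0 < Mn := by omega
  have hm1 : (1:ℝ) ≤ (Mn:ℝ) := by exact_mod_cast hM
  refine ⟨RP.φnet k Mn s hk0, ?_, ?_⟩
  · refine ⟨(k-2)*(s+2)+1+s+1, ?_, RP.φnet_realized k Mn s hk0 _ ?_⟩
    · have hnat : (k-2)*(s+2)+1+s+1 = (k-2)*K7 + K7 := by rw [hs2]; omega
      rw [hnat]
      have hc : ((k-2:ℕ):ℝ) = (k:ℝ) - 2 := by
        rw [Nat.cast_sub hk]; norm_num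
      have : (((k-2)*K7 + K7 : ℕ):ℝ) = ((k-2:ℕ):ℝ) * (K7:ℕ) + (K7:ℕ) := by push_cast; ring
      rw [this, hc]
      have hKc : ((K7:ℕ):ℝ) = 7*(k:ℝ)*(L:ℝ) := by rw [hK7]; push_cast; ring
      rw [hKc]
      nlinarith [sq_nonneg ((k:ℝ))]
    · push_cast [hMn]
      have : (0:ℝ) ≤ (N:ℝ) := Nat.cast_nonneg N
      linarith
  · intro x hx
    have hx' : x ∈ Set.Icc (0:(Fin k → ℝ)) 1 := hx
    rw [RP.φnet_eq k Mn s hk hM x hx']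
    have hprod : (∏ i, x i) = ∏ i ∈ Finset.range k, RP.xev k x i := by
      rw [← Fin.prod_univ_eq_prod_range (RP.xev k x) k]
      apply Finset.prod_congr rfl
      intro i _
      rw [RP.xev, dif_pos i.isLt]
    have hchain := RP.chain_err Mn s hM (RP.xev k x) (fun i => RP.xev_mem hx' i) (k-1)
    rw [show (k-1)+1 = k from by omega] at hchain
    rw [hprod]
    have hrpow : ((N:ℝ)+1) ^ (-(7*(k:ℝ)*L)) = ((Mn:ℝ)^(K7:ℕ))⁻¹ := by
      have hb : ((N:ℝ)+1) = (Mn:ℝ) := by rw [hMn]; push_cast; ring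
      rw [hb, show (-(7*(k:ℝ)*L)) = -((K7:ℕ):ℝ) from by rw [hK7]; push_cast; ring,
        Real.rpow_neg (by positivity), Real.rpow_natCast]
    rw [hrpow]
    have hck : ((k-1:ℕ):ℝ) = (k:ℝ)-1 := by
      rw [Nat.cast_sub (by omega : 1 ≤ k)]; norm_num
    have hk1 : (0:ℝ) ≤ (k:ℝ)-1 := by
      have : (1:ℝ) ≤ (k:ℝ) := by exact_mod_cast (by omega : 1 ≤ k)
      linarith
    have hpow : (Mn:ℝ)^K7 ≤ (Mn:ℝ)^(2*s) := by
      apply pow_le_pow_right₀ hm1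
      omega
    have hpowpos : (0:ℝ) < (Mn:ℝ)^K7 := by positivity
    have hpow2pos : (0:ℝ) < (Mn:ℝ)^(2*s) := by positivity
    have hinv : 1/(Mn:ℝ)^(2*s) ≤ ((Mn:ℝ)^K7)⁻¹ := by
      rw [one_div]
      exact inv_anti₀ hpowpos hpow
    calc |RP.Z Mn s (RP.xev k x) (k-1) - ∏ i ∈ Finset.range k, RP.xev k x i|
        ≤ ((k-1:ℕ):ℝ) * (1/(Mn:ℝ)^(2*s)) := hchain
      _ ≤ ((k:ℝ)-1) * ((Mn:ℝ)^K7)⁻¹ := by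
          rw [hck]
          apply mul_le_mul_of_nonneg_left hinv hk1
      _ ≤ 9 * ((k:ℝ)-1) * ((Mn:ℝ)^K7)⁻¹ := by
          nlinarith [mul_nonneg hk1 (le_of_lt (inv_pos.mpr hpowpos))]
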